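/- Let R₈ ⊆ ℝ^8 be the set of roots of the E₈ lattice: the 240 vectors v with v₁² + ⋯ + v₈² = 2, such that either all coordinates v_i are integers or all coordinates v_i are in ℤ + 1/2, and v₁ + ⋯ + v₈ is an even integer. Then R₈ can be partitioned into 15 pairwise disjoint sets, each of the form {v₁, …, v₈, −v₁, …, −v₈} with ⟨v_i, v_j⟩ = 2·δ_{ij}; hence the maximum number of pairwise disjoint 2-frames in the roots of E₈ is 15. -/

import Mathlib

/-!
Identify the coordinate set `Fin 8` with `𝔽₂³`. The integer roots are `±eₓ ± e_y` with `x ≠ y`;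
for each `c ≠ 0` those with `x + y = c` form a frame, because the pairs `{x, x + c}` partition
`𝔽₂³`. The half-integer roots are `ε / 2` with `ε = (-1)^f` for an even-weight `f : 𝔽₂³ → 𝔽₂`,
i.e. a polynomial of degree at most two; those whose `f` has a given quadratic part `q` are the
`±(-1)^(q + ⟨a, ·⟩) / 2`, a frame by orthogonality of characters. These `7 + 8 = 15` frames are
the fibres of a labelling of the roots, so they partition the `240` roots; since every `2`-frame
has `16` elements, no more than `15` disjoint ones fit.
-/

/-- The set of roots of the `E₈` lattice: the 240 vectors `v ∈ ℝ^8` of squared norm `2`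
whose coordinates are either all integers or all in `ℤ + 1/2`, and whose coordinate sum
is an even integer. -/
def E8Roots : Set (Fin 8 → ℝ) :=
  {v | (∑ t, (v t) ^ 2 = 2) ∧
    ((∀ t, ∃ n : ℤ, v t = n) ∨ (∀ t, ∃ n : ℤ, v t = n + 1 / 2)) ∧
    (∃ m : ℤ, ∑ t, v t = 2 * m)}

/-- A `2`-frame of rank `r` in `ℝ^8`: a set of the form `{v₁, …, v_r, -v₁, …, -v_r}`
with `⟨vᵢ, vⱼ⟩ = 2·δᵢⱼ`. -/
def Is2FrameR (r : ℕ) (S : Set (Fin 8 → ℝ)) : Prop :=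
  ∃ v : Fin r → (Fin 8 → ℝ),
    (∀ i j, ∑ t, v i t * v j t = if i = j then (2 : ℝ) else 0) ∧
    S = Set.range v ∪ Set.range fun i => -(v i)

open Finset Function

theorem Is2FrameR.encard_eq {r : ℕ} {S : Set (Fin 8 → ℝ)} (hS : Is2FrameR r S) :
    S.encard = 2 * r := by
  obtain ⟨v, hv, rfl⟩ := hS
  have hself : ∀ i, ∑ t, v i t * v i t = 2 := fun i => by simpa using hv i i
  have hinj : Injective v := by
    intro i j hij
    by_contra hne
    have := hv i j
    rw [if_neg hne, hij, hself] at this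
    norm_num at this
  have hdisj : Disjoint (Set.range v) (Set.range fun i => -v i) := by
    rw [Set.disjoint_left]
    rintro _ ⟨i, rfl⟩ ⟨j, hj⟩
    have := hv j i
    rw [← hj] at this
    simp only [Pi.neg_apply, mul_neg, sum_neg_distrib, hself] at this
    split_ifs at this <;> norm_num at this
  have hcard : ∀ f : Fin r → Fin 8 → ℝ, f.Injective → (Set.range f).encard = r := fun f hf => by
    rw [← Set.image_univ, hf.encard_image, Set.encard_univ, ENat.card_eq_coe_fintype_card,
      Fintype.card_fin]
  rw [Set.encard_union_eq hdisj, hcard v hinj, hcard (fun i => -v i) (neg_injective.comp hinj)]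
  ring

theorem Set.card_mul_le_encard_of_pairwise_disjoint {ι α : Type*} [Fintype ι] {s : ι → Set α}
    {t : Set α} {k : ℕ∞} (hd : Pairwise (Disjoint on s)) (hk : ∀ i, (s i).encard = k)
    (ht : ∀ i, s i ⊆ t) : Fintype.card ι * k ≤ t.encard :=
  calc Fintype.card ι * k = ∑ᶠ i, (s i).encard := by
        simp [hk, finsum_eq_sum_of_fintype]
    _ = (⋃ i, s i).encard := (Set.encard_iUnion_of_finite hd).symm
    _ ≤ t.encard := Set.encard_le_encard (Set.iUnion_subset ht)

noncomputable def halve (w : Fin 8 → ℤ) : Fin 8 → ℝ := fun t => (w t : ℝ) / 2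

theorem halve_injective : Injective halve := fun w w' h =>
  funext fun t => by simpa [halve] using congrFun h t

theorem halve_neg (w : Fin 8 → ℤ) : halve (-w) = -halve w := by
  ext t
  simp [halve, neg_div]

theorem sum_halve_mul_halve (w w' : Fin 8 → ℤ) :
    ∑ t, halve w t * halve w' t = ((∑ t, w t * w' t : ℤ) : ℝ) / 4 := by
  push_cast
  rw [sum_div]
  exact sum_congr rfl fun t _ => by simp only [halve]; ring

def IsDoubledRoot (w : Fin 8 → ℤ) : Prop :=
  ∑ t, w t ^ 2 = 8 ∧ ((∀ t, Even (w t)) ∨ (∀ t, Odd (w t))) ∧ 4 ∣ ∑ t, w t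

instance (w : Fin 8 → ℤ) : Decidable (IsDoubledRoot w) := by
  unfold IsDoubledRoot
  infer_instance

theorem IsDoubledRoot.neg {w : Fin 8 → ℤ} (h : IsDoubledRoot w) : IsDoubledRoot (-w) := by
  obtain ⟨hsq, hpar, hsum⟩ := h
  refine ⟨by simpa using hsq, ?_, by simpa using hsum⟩
  rcases hpar with hpar | hpar
  · exact Or.inl fun t => (hpar t).neg
  · exact Or.inr fun t => (hpar t).neg

theorem exists_int_eq_div_two_iff {k : ℤ} : (∃ n : ℤ, (k : ℝ) / 2 = n) ↔ Even k := by
  constructor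
  · rintro ⟨n, hn⟩
    exact ⟨n, by exact_mod_cast (by linarith : (k : ℝ) = n + n)⟩
  · rintro ⟨n, rfl⟩
    exact ⟨n, by push_cast; ring⟩

theorem exists_int_add_half_eq_div_two_iff {k : ℤ} :
    (∃ n : ℤ, (k : ℝ) / 2 = n + 1 / 2) ↔ Odd k := by
  constructor
  · rintro ⟨n, hn⟩
    exact ⟨n, by exact_mod_cast (by linarith : (k : ℝ) = 2 * n + 1)⟩
  · rintro ⟨n, rfl⟩
    exact ⟨n, by push_cast; ring⟩

theorem exists_two_mul_int_eq_div_two_iff {k : ℤ} :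
    (∃ m : ℤ, (k : ℝ) / 2 = 2 * m) ↔ 4 ∣ k := by
  constructor
  · rintro ⟨m, hm⟩
    exact ⟨m, by exact_mod_cast (by linarith : (k : ℝ) = 4 * m)⟩
  · rintro ⟨m, rfl⟩
    exact ⟨m, by push_cast; ring⟩

theorem halve_mem_E8Roots_iff {w : Fin 8 → ℤ} : halve w ∈ E8Roots ↔ IsDoubledRoot w := by
  have hsq : ∑ t, halve w t ^ 2 = ((∑ t, w t ^ 2 : ℤ) : ℝ) / 4 := by
    simpa only [sq] using sum_halve_mul_halve w w
  have hsum : ∑ t, halve w t = ((∑ t, w t : ℤ) : ℝ) / 2 := by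
    push_cast
    rw [sum_div]
    rfl
  rw [E8Roots, Set.mem_ofPred_eq, hsq, hsum]
  simp only [halve, exists_int_eq_div_two_iff, exists_int_add_half_eq_div_two_iff,
    exists_two_mul_int_eq_div_two_iff, IsDoubledRoot]
  constructor <;> rintro ⟨h1, h2, h3⟩ <;> refine ⟨?_, h2, h3⟩
  · exact_mod_cast (by linarith : ((∑ t, w t ^ 2 : ℤ) : ℝ) = 8)
  · rw [h1]; norm_num

theorem exists_halve_eq_of_mem_E8Roots {v : Fin 8 → ℝ} (hv : v ∈ E8Roots) :
    ∃ w, halve w = v := by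
  have hcoord : ∀ t, ∃ k : ℤ, (k : ℝ) / 2 = v t := by
    rcases hv.2.1 with h | h <;> intro t <;> obtain ⟨n, hn⟩ := h t
    · exact ⟨2 * n, by rw [hn]; push_cast; ring⟩
    · exact ⟨2 * n + 1, by rw [hn]; push_cast; ring⟩
  choose w hw using hcoord
  exact ⟨w, funext hw⟩

theorem mem_E8Roots_iff {v : Fin 8 → ℝ} : v ∈ E8Roots ↔ ∃ w, IsDoubledRoot w ∧ halve w = v := by
  constructor
  · intro hv
    obtain ⟨w, rfl⟩ := exists_halve_eq_of_mem_E8Roots hv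
    exact ⟨w, halve_mem_E8Roots_iff.1 hv, rfl⟩
  · rintro ⟨w, hw, rfl⟩
    exact halve_mem_E8Roots_iff.2 hw

def sgn (b : Bool) : ℤ := bif b then -1 else 1

theorem exists_sgn_eq_of_sq_eq_one {n : ℤ} (h : n ^ 2 = 1) : ∃ s, sgn s = n := by
  rcases sq_eq_one_iff.mp h with rfl | rfl
  exacts [⟨false, rfl⟩, ⟨true, rfl⟩]

theorem exists_eq_single_add_single_of_sum_sq_eq_two {ι : Type*} [Fintype ι] [DecidableEq ι]
    {f : ι → ℤ} (h : ∑ i, f i ^ 2 = 2) :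
    ∃ x y s s', x ≠ y ∧ f = Pi.single x (sgn s) + Pi.single y (sgn s') := by
  have hunit : ∀ i, f i ≠ 0 → f i ^ 2 = 1 := by
    intro i hi
    have hle : f i ^ 2 ≤ 2 := h ▸ single_le_sum (fun j _ => sq_nonneg (f j)) (mem_univ i)
    have hbound : -1 ≤ f i ∧ f i ≤ 1 := by constructor <;> nlinarith
    rcases (show f i = -1 ∨ f i = 1 by omega) with hf | hf <;> rw [hf] <;> norm_num
  have hsupp : (#{i | f i ≠ 0} : ℤ) = 2 := by
    rw [← h, ← sum_filter_of_ne fun i _ hi => (pow_ne_zero_iff two_ne_zero).mp hi,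
      card_eq_sum_ones]
    push_cast
    exact sum_congr rfl fun i hi => (hunit i (mem_filter.mp hi).2).symm
  obtain ⟨x, y, hxy, hxy'⟩ := card_eq_two.mp (by exact_mod_cast hsupp)
  have hmem : ∀ i, f i ≠ 0 ↔ i = x ∨ i = y := fun i => by
    simpa using congrArg (i ∈ ·) hxy'
  obtain ⟨s, hs⟩ := exists_sgn_eq_of_sq_eq_one (hunit x ((hmem x).2 (Or.inl rfl)))
  obtain ⟨s', hs'⟩ := exists_sgn_eq_of_sq_eq_one (hunit y ((hmem y).2 (Or.inr rfl)))
  refine ⟨x, y, s, s', hxy, funext fun i => ?_⟩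
  by_cases hx : i = x
  · subst hx; simp [hxy, hs]
  by_cases hy : i = y
  · subst hy; simp [hx, hs']
  simpa [Pi.single_apply, hx, hy] using mt (hmem i).1 (by tauto)

theorem exists_eq_sgn_comp_of_odd {ι : Type*} [Fintype ι] {f : ι → ℤ} (hodd : ∀ i, Odd (f i))
    (h : ∑ i, f i ^ 2 = Fintype.card ι) : ∃ ε : ι → Bool, f = sgn ∘ ε := by
  have hge : ∀ i, 1 ≤ f i ^ 2 := fun i => by
    have hne : f i ≠ 0 := fun h0 => Int.not_odd_zero (h0 ▸ hodd i)
    exact one_le_sq_iff_one_le_abs _ |>.2 (Int.one_le_abs hne)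
  have hsq : ∀ i, f i ^ 2 = 1 := by
    have hzero : ∑ i, (f i ^ 2 - 1) = 0 := by simp [sum_sub_distrib, h]
    intro i
    linarith [(sum_eq_zero_iff_of_nonneg fun j _ => sub_nonneg.2 (hge j)).1 hzero i (mem_univ i)]
  choose ε hε using fun i => exists_sgn_eq_of_sq_eq_one (hsq i)
  exact ⟨ε, funext fun i => (hε i).symm⟩

def intRoot (x y : Fin 8) (s s' : Bool) : Fin 8 → ℤ :=
  2 • (Pi.single x (sgn s) + Pi.single y (sgn s'))

theorem IsDoubledRoot.eq_intRoot_or_eq_sgn_comp {w : Fin 8 → ℤ} (h : IsDoubledRoot w) :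
    (∃ x y s s', x ≠ y ∧ w = intRoot x y s s') ∨ ∃ ε, w = sgn ∘ ε := by
  obtain ⟨hsq, heven | hodd, -⟩ := h
  · left
    choose n hn using heven
    have hn2 : ∑ t, n t ^ 2 = 2 := by
      have : ∑ t, w t ^ 2 = 4 * ∑ t, n t ^ 2 := by
        rw [mul_sum]
        exact sum_congr rfl fun t _ => by rw [hn t]; ring
      omega
    obtain ⟨x, y, s, s', hxy, hn'⟩ := exists_eq_single_add_single_of_sum_sq_eq_two hn2
    refine ⟨x, y, s, s', hxy, funext fun t => ?_⟩
    rw [intRoot, ← hn', Pi.smul_apply, hn t, two_smul]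
  · exact Or.inr (exists_eq_sgn_comp_of_odd hodd (by simpa using hsq))

-- `Fin 8` is `𝔽₂³` via binary digits, with `^^^` as addition; `quad q` is the quadratic form
-- `q₀ t₁ t₂ + q₁ t₀ t₂ + q₂ t₀ t₁`.
def dot (a t : Fin 8) : Bool :=
  (a.val.testBit 0 && t.val.testBit 0) ^^ (a.val.testBit 1 && t.val.testBit 1) ^^
    (a.val.testBit 2 && t.val.testBit 2)

def quad (q t : Fin 8) : Bool :=
  (q.val.testBit 0 && t.val.testBit 1 && t.val.testBit 2) ^^
    (q.val.testBit 1 && t.val.testBit 0 && t.val.testBit 2) ^^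
    (q.val.testBit 2 && t.val.testBit 0 && t.val.testBit 1)

-- The sign in the first case is chosen so that the vectors indexed by `a` and `a ^^^ c` are
-- orthogonal. The label `.inl 0` is degenerate (`frameVec (.inl 0) a = 4 • Pi.single a 1`).
def frameVec : Fin 8 ⊕ Fin 8 → Fin 8 → Fin 8 → ℤ
  | .inl c, a => Pi.single a 2 + Pi.single (a ^^^ c) (2 * sgn (decide (a ^^^ c < a)))
  | .inr q, a => fun t => sgn (quad q t ^^ dot a t)

def xorSum (p : Fin 8 → Bool) : Fin 8 :=
  (List.finRange 8).foldl (fun acc t => bif p t then acc ^^^ t else acc) 0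

-- `xorSum` is additive in its argument and vanishes on affine functions of `t`, so on a
-- half-integer root it returns the quadratic part, and on `±2eₓ ± 2e_y` it returns `x ^^^ y`.
def rootClass (w : Fin 8 → ℤ) : Fin 8 ⊕ Fin 8 :=
  if Even (w 0) then .inl (xorSum (w · ≠ 0)) else .inr (xorSum (w · < 0))

theorem frameVec_orthogonal {κ : Fin 8 ⊕ Fin 8} (hκ : κ ≠ .inl 0) (a b : Fin 8) :
    ∑ t, frameVec κ a t * frameVec κ b t = if a = b then 8 else 0 := by
  revert κ a b
  decide

theorem isDoubledRoot_frameVec {κ : Fin 8 ⊕ Fin 8} (hκ : κ ≠ .inl 0) (a : Fin 8) :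
    IsDoubledRoot (frameVec κ a) := by
  revert κ a
  decide

theorem rootClass_frameVec {κ : Fin 8 ⊕ Fin 8} (hκ : κ ≠ .inl 0) (a : Fin 8) :
    rootClass (frameVec κ a) = κ ∧ rootClass (-frameVec κ a) = κ := by
  revert κ a
  decide

theorem intRoot_mem_frameVec_rootClass {x y : Fin 8} (hxy : x ≠ y) (s s' : Bool) :
    let w := intRoot x y s s'
    rootClass w ≠ .inl 0 ∧ ∃ a, w = frameVec (rootClass w) a ∨ w = -frameVec (rootClass w) a := by
  revert x y s s'
  decide

set_option maxRecDepth 100000 in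
theorem sgn_comp_mem_frameVec_rootClass {ε : Fin 8 → Bool} (h : IsDoubledRoot (sgn ∘ ε)) :
    let w := sgn ∘ ε
    rootClass w ≠ .inl 0 ∧ ∃ a, w = frameVec (rootClass w) a ∨ w = -frameVec (rootClass w) a := by
  revert ε
  decide

noncomputable def frame (κ : Fin 8 ⊕ Fin 8) : Set (Fin 8 → ℝ) :=
  Set.range (fun a => halve (frameVec κ a)) ∪ Set.range fun a => -halve (frameVec κ a)

theorem is2FrameR_frame {κ : Fin 8 ⊕ Fin 8} (hκ : κ ≠ .inl 0) : Is2FrameR 8 (frame κ) := by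
  refine ⟨fun a => halve (frameVec κ a), fun a b => ?_, rfl⟩
  rw [sum_halve_mul_halve, frameVec_orthogonal hκ]
  split_ifs <;> norm_num

theorem exists_rootClass_eq_of_mem_frame {κ : Fin 8 ⊕ Fin 8} (hκ : κ ≠ .inl 0)
    {v : Fin 8 → ℝ} (hv : v ∈ frame κ) :
    ∃ w, IsDoubledRoot w ∧ rootClass w = κ ∧ halve w = v := by
  rcases hv with ⟨a, rfl⟩ | ⟨a, rfl⟩
  · exact ⟨_, isDoubledRoot_frameVec hκ a, (rootClass_frameVec hκ a).1, rfl⟩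
  · exact ⟨_, (isDoubledRoot_frameVec hκ a).neg, (rootClass_frameVec hκ a).2, halve_neg _⟩

theorem frame_subset_E8Roots {κ : Fin 8 ⊕ Fin 8} (hκ : κ ≠ .inl 0) : frame κ ⊆ E8Roots :=
  fun _ hv => by
    obtain ⟨w, hw, -, rfl⟩ := exists_rootClass_eq_of_mem_frame hκ hv
    exact halve_mem_E8Roots_iff.2 hw

theorem disjoint_frame {κ κ' : Fin 8 ⊕ Fin 8} (hκ : κ ≠ .inl 0) (hκ' : κ' ≠ .inl 0)
    (hne : κ ≠ κ') : Disjoint (frame κ) (frame κ') := by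
  refine Set.disjoint_left.2 fun v hv hv' => hne ?_
  obtain ⟨w, -, rfl, rfl⟩ := exists_rootClass_eq_of_mem_frame hκ hv
  obtain ⟨w', -, rfl, hww'⟩ := exists_rootClass_eq_of_mem_frame hκ' hv'
  rw [halve_injective hww']

theorem IsDoubledRoot.mem_frame_rootClass {w : Fin 8 → ℤ} (h : IsDoubledRoot w) :
    rootClass w ≠ .inl 0 ∧ halve w ∈ frame (rootClass w) := by
  obtain ⟨hκ, a, ha | ha⟩ : rootClass w ≠ .inl 0 ∧
      ∃ a, w = frameVec (rootClass w) a ∨ w = -frameVec (rootClass w) a := by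
    rcases h.eq_intRoot_or_eq_sgn_comp with ⟨x, y, s, s', hxy, rfl⟩ | ⟨ε, rfl⟩
    exacts [intRoot_mem_frameVec_rootClass hxy s s', sgn_comp_mem_frameVec_rootClass h]
  · exact ⟨hκ, Or.inl ⟨a, congrArg halve ha.symm⟩⟩
  · exact ⟨hκ, Or.inr ⟨a, (halve_neg _).symm.trans (congrArg halve ha.symm)⟩⟩

abbrev FrameLabel : Type := {κ : Fin 8 ⊕ Fin 8 // κ ≠ .inl 0}

theorem card_frameLabel : Fintype.card FrameLabel = 15 := by
  decide

theorem iUnion_frame : ⋃ κ : FrameLabel, frame κ = E8Roots := by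
  refine subset_antisymm (Set.iUnion_subset fun κ => frame_subset_E8Roots κ.2) fun v hv => ?_
  obtain ⟨w, hw, rfl⟩ := mem_E8Roots_iff.1 hv
  obtain ⟨hκ, hmem⟩ := hw.mem_frame_rootClass
  exact Set.mem_iUnion.2 ⟨⟨_, hκ⟩, hmem⟩

theorem encard_E8Roots_le : E8Roots.encard ≤ 240 := by
  rw [← iUnion_frame]
  calc _ ≤ ∑ κ : FrameLabel, (frame κ).encard := Set.encard_iUnion_le_of_fintype _
    _ = ∑ _κ : FrameLabel, 16 := sum_congr rfl fun κ _ => by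
      rw [(is2FrameR_frame κ.2).encard_eq]; rfl
    _ = 240 := by rw [sum_const, card_univ, card_frameLabel]; rfl

theorem stmt13 :
    (∃ F : Fin 15 → Set (Fin 8 → ℝ),
      (∀ i j, i ≠ j → Disjoint (F i) (F j)) ∧
      (⋃ i, F i) = E8Roots ∧
      ∀ i, Is2FrameR 8 (F i)) ∧
    (∀ n : ℕ, ∀ G : Fin n → Set (Fin 8 → ℝ),
      (∀ i j, i ≠ j → Disjoint (G i) (G j)) →
      (∀ i, G i ⊆ E8Roots) →
      (∀ i, Is2FrameR 8 (G i)) →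
      n ≤ 15) := by
  let e : Fin 15 ≃ FrameLabel := (Fintype.equivFinOfCardEq card_frameLabel).symm
  refine ⟨⟨fun i => frame (e i), fun i j hij => ?_, ?_, fun i => is2FrameR_frame (e i).2⟩, ?_⟩
  · exact disjoint_frame (e i).2 (e j).2 (Subtype.val_injective.ne (e.injective.ne hij))
  · rw [← iUnion_frame]
    exact e.surjective.iUnion_comp fun κ => frame κ
  · intro n G hdisj hsub hframe
    have h := (Set.card_mul_le_encard_of_pairwise_disjoint (fun i j => hdisj i j)
      (fun i => (hframe i).encard_eq) hsub).trans encard_E8Roots_le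
    simp only [Fintype.card_fin] at h
    norm_cast at h
    omega
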